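/- arXiv:1512.07840 — 4 statements merged into one kernel-verified Lean document; each statement's English description precedes it below -/
import Mathlib

section
/- Let V be a real Hilbert space, Υ a finite index set, and for each ξ ∈ Υ let O_ξ ⊆ V be a linear subspace with continuous linear maps P_ξ : V → O_ξ satisfying Σ_ξ P_ξ = id_V. Let Ṽ ⊆ V be a subspace and define c_pu := sup_{φ≠0} (Σ_ξ inf_{ṽ ∈ Ṽ ∩ O_ξ} ‖P_ξ(φ) − ṽ‖²)^{1/2} / ‖φ‖. Then for every continuous linear functional f on V that vanishes on Ṽ, we have ‖f‖_{V'} ≤ c_pu · (Σ_ξ ‖f‖²_{O_ξ'})^{1/2}, where ‖f‖_{O_ξ'} is the dual norm of the restriction of f to O_ξ. -/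
set_option synthInstance.maxHeartbeats 400000 in
/-- Abstract localized estimate for the dual norm of a functional vanishing on `Vt`. -/
theorem stmt_0 {V : Type*} [NormedAddCommGroup V] [InnerProductSpace ℝ V] [CompleteSpace V]
    {ι : Type*} [Fintype ι]
    (O : ι → Submodule ℝ V) (P : ι → V →L[ℝ] V)
    (hrange : ∀ ξ, ∀ v : V, P ξ v ∈ O ξ)
    (hsum : ∀ v : V, ∑ ξ, P ξ v = v)
    (Vt : Submodule ℝ V) (c : ℝ)
    (hc : ∀ φ : V, φ ≠ 0 →
      Real.sqrt (∑ ξ, ⨅ w : (Vt ⊓ O ξ : Submodule ℝ V), ‖P ξ φ - (w : V)‖ ^ 2) / ‖φ‖ ≤ c)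
    (f : V →L[ℝ] ℝ) (hf : ∀ w ∈ Vt, f w = 0) :
    ‖f‖ ≤ c * Real.sqrt (∑ ξ, ‖f.comp (O ξ).subtypeL‖ ^ 2) := by
  set Q : ℝ := ∑ ξ, ‖f.comp (O ξ).subtypeL‖ ^ 2 with hQdef
  have hQ0 : 0 ≤ Q := Finset.sum_nonneg fun ξ _ => sq_nonneg _
  by_cases htriv : ∀ φ : V, φ = 0
  · have hfz : f = 0 := by ext v; rw [htriv v]; simp
    have hQz : Q = 0 := by
      apply Finset.sum_eq_zero
      intro ξ _
      rw [hfz, ContinuousLinearMap.zero_comp]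
      have h0 : ‖(0 : (O ξ : Submodule ℝ V) →L[ℝ] ℝ)‖ = 0 := ContinuousLinearMap.opNorm_zero
      rw [h0]
      ring
    rw [hfz, hQz]
    simp
  push_neg at htriv
  obtain ⟨φ0, hφ0⟩ := htriv
  have hc0 : 0 ≤ c :=
    le_trans (div_nonneg (Real.sqrt_nonneg _) (norm_nonneg _)) (hc φ0 hφ0)
  apply f.opNorm_le_bound (mul_nonneg hc0 (Real.sqrt_nonneg _))
  intro φ
  by_cases hφ : φ = 0
  · simp [hφ]
  have hφpos : 0 < ‖φ‖ := norm_pos_iff.mpr hφ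
  set S : ι → ℝ := fun ξ => ⨅ w : (Vt ⊓ O ξ : Submodule ℝ V), ‖P ξ φ - (w : V)‖ ^ 2 with hSdef
  have hS0 : ∀ ξ, 0 ≤ S ξ := fun ξ => Real.iInf_nonneg fun w => sq_nonneg _
  -- key pointwise estimate
  have key : ∀ ξ, |f (P ξ φ)| ≤ ‖f.comp (O ξ).subtypeL‖ * Real.sqrt (S ξ) := by
    intro ξ
    set g := f.comp (O ξ).subtypeL with hg
    have hsq : |f (P ξ φ)| ^ 2 ≤ ‖g‖ ^ 2 * S ξ := by
      rw [hSdef]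
      simp only
      rw [Real.mul_iInf_of_nonneg (sq_nonneg _)]
      apply le_ciInf
      intro w
      have hwVt : (w : V) ∈ Vt := w.2.1
      have hwO : (w : V) ∈ O ξ := w.2.2
      have hmem : P ξ φ - (w : V) ∈ O ξ := sub_mem (hrange ξ φ) hwO
      have hval : f (P ξ φ) = g ⟨P ξ φ - (w : V), hmem⟩ := by
        simp [hg, map_sub, hf _ hwVt]
      have hle : |g ⟨P ξ φ - (w : V), hmem⟩| ≤ ‖g‖ * ‖P ξ φ - (w : V)‖ := by
        have := g.le_opNorm ⟨P ξ φ - (w : V), hmem⟩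
        simpa using this
      rw [hval]
      calc |g ⟨P ξ φ - (w : V), hmem⟩| ^ 2 ≤ (‖g‖ * ‖P ξ φ - (w : V)‖) ^ 2 := by
            apply sq_le_sq' _ hle
            linarith [abs_nonneg (g ⟨P ξ φ - (w : V), hmem⟩)]
        _ = ‖g‖ ^ 2 * ‖P ξ φ - (w : V)‖ ^ 2 := by ring
    calc |f (P ξ φ)| = Real.sqrt (|f (P ξ φ)| ^ 2) := (Real.sqrt_sq (abs_nonneg _)).symm
      _ ≤ Real.sqrt (‖g‖ ^ 2 * S ξ) := Real.sqrt_le_sqrt hsq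
      _ = ‖g‖ * Real.sqrt (S ξ) := by
          rw [Real.sqrt_mul (sq_nonneg _), Real.sqrt_sq (norm_nonneg g)]
  have h1 : |f φ| ≤ ∑ ξ, ‖f.comp (O ξ).subtypeL‖ * Real.sqrt (S ξ) := by
    calc |f φ| = |f (∑ ξ, P ξ φ)| := by rw [hsum φ]
      _ = |∑ ξ, f (P ξ φ)| := by rw [map_sum]
      _ ≤ ∑ ξ, |f (P ξ φ)| := Finset.abs_sum_le_sum_abs _ _
      _ ≤ ∑ ξ, ‖f.comp (O ξ).subtypeL‖ * Real.sqrt (S ξ) :=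
          Finset.sum_le_sum fun ξ _ => key ξ
  have h2 : ∑ ξ, ‖f.comp (O ξ).subtypeL‖ * Real.sqrt (S ξ)
      ≤ Real.sqrt Q * Real.sqrt (∑ ξ, S ξ) := by
    have := Real.sum_mul_le_sqrt_mul_sqrt Finset.univ
      (fun ξ => ‖f.comp (O ξ).subtypeL‖) (fun ξ => Real.sqrt (S ξ))
    calc ∑ ξ, ‖f.comp (O ξ).subtypeL‖ * Real.sqrt (S ξ)
        ≤ Real.sqrt (∑ ξ, ‖f.comp (O ξ).subtypeL‖ ^ 2)
          * Real.sqrt (∑ ξ, Real.sqrt (S ξ) ^ 2) := this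
      _ = Real.sqrt Q * Real.sqrt (∑ ξ, S ξ) := by
          congr 1
          congr 1
          exact Finset.sum_congr rfl fun ξ _ => Real.sq_sqrt (hS0 ξ)
  have h3 : Real.sqrt (∑ ξ, S ξ) ≤ c * ‖φ‖ :=
    (div_le_iff₀ hφpos).mp (hc φ hφ)
  have h4 : |f φ| ≤ Real.sqrt Q * (c * ‖φ‖) :=
    h1.trans (h2.trans (mul_le_mul_of_nonneg_left h3 (Real.sqrt_nonneg _)))
  calc ‖f φ‖ = |f φ| := Real.norm_eq_abs _
    _ ≤ Real.sqrt Q * (c * ‖φ‖) := h4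
    _ = c * Real.sqrt Q * ‖φ‖ := by ring
end

section
/- Let V be a real Hilbert space, Υ a finite index set with closed subspaces O_ξ ⊆ V, and suppose Υ = Υ₁ ∪̇ ... ∪̇ Υ_J is a partition such that within each block Υ_j, any two distinct subspaces O_{ξ₁}, O_{ξ₂} are orthogonal. Then for every continuous linear functional f on V, (Σ_{ξ∈Υ} ‖f‖²_{O_ξ'})^{1/2} ≤ √J · ‖f‖_{V'}. -/
/-!
By the Riesz representation theorem, the norm of `f` restricted to a closed subspace `K` is the
norm of the orthogonal projection onto `K` of the Riesz vector `v` of `f`. Projections of `v` onto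
mutually orthogonal subspaces satisfy Bessel's inequality, so each of the `J` blocks contributes
at most `‖v‖² = ‖f‖²` to the sum.
-/

section

variable {𝕜 E : Type*} [RCLike 𝕜] [NormedAddCommGroup E] [InnerProductSpace 𝕜 E]

theorem Submodule.innerSL_comp_subtypeL (K : Submodule 𝕜 E) [K.HasOrthogonalProjection]
    (v : E) : (innerSL 𝕜 v).comp K.subtypeL = innerSL 𝕜 (K.orthogonalProjectionOnto v) := by
  ext x
  simp

theorem Submodule.norm_comp_subtypeL_eq_norm_orthogonalProjectionOnto [CompleteSpace E]
    (K : Submodule 𝕜 E) [K.HasOrthogonalProjection] (f : StrongDual 𝕜 E) :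
    ‖f.comp K.subtypeL‖ = ‖K.orthogonalProjectionOnto ((InnerProductSpace.toDual 𝕜 E).symm f)‖ := by
  set v := (InnerProductSpace.toDual 𝕜 E).symm f
  have hf : f = innerSL 𝕜 v := ((InnerProductSpace.toDual 𝕜 E).apply_symm_apply f).symm
  rw [hf, K.innerSL_comp_subtypeL, innerSL_apply_norm]

variable {ι : Type*} [Fintype ι] {K : ι → Submodule 𝕜 E} [∀ i, (K i).HasOrthogonalProjection]

theorem OrthogonalFamily.sum_norm_orthogonalProjectionOnto_sq_le
    (hK : OrthogonalFamily 𝕜 (fun i ↦ K i) fun i ↦ (K i).subtypeₗᵢ) (v : E) :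
    ∑ i, ‖(K i).orthogonalProjectionOnto v‖ ^ 2 ≤ ‖v‖ ^ 2 := by
  set w : E := ∑ i, ((K i).orthogonalProjectionOnto v : E)
  have hw : ‖w‖ ^ 2 = ∑ i, ‖(K i).orthogonalProjectionOnto v‖ ^ 2 :=
    hK.norm_sum (fun i ↦ (K i).orthogonalProjectionOnto v) Finset.univ
  have hwv : ‖w‖ ^ 2 = RCLike.re (inner 𝕜 w v) := by
    rw [hw, sum_inner, map_sum]
    refine Finset.sum_congr rfl fun i _ ↦ ?_
    rw [← Submodule.inner_orthogonalProjectionOnto_eq_of_mem_left, inner_self_eq_norm_sq]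
  have hwv_le : ‖w‖ ≤ ‖v‖ := by
    have := re_inner_le_norm (𝕜 := 𝕜) w v
    nlinarith [norm_nonneg w, norm_nonneg v]
  rw [← hw]
  gcongr

theorem OrthogonalFamily.sum_norm_comp_subtypeL_sq_le [CompleteSpace E]
    (hK : OrthogonalFamily 𝕜 (fun i ↦ K i) fun i ↦ (K i).subtypeₗᵢ) (f : StrongDual 𝕜 E) :
    ∑ i, ‖f.comp (K i).subtypeL‖ ^ 2 ≤ ‖f‖ ^ 2 := by
  simp_rw [Submodule.norm_comp_subtypeL_eq_norm_orthogonalProjectionOnto]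
  rw [← (InnerProductSpace.toDual 𝕜 E).symm.norm_map f]
  exact hK.sum_norm_orthogonalProjectionOnto_sq_le _

end

/-- Orthogonal-grouping efficiency estimate: if the index set is partitioned into `J`
blocks such that subspaces within each block are pairwise orthogonal, then the
ℓ²-sum of the local dual norms is bounded by `√J` times the global dual norm. -/
theorem stmt_2 {V : Type*} [NormedAddCommGroup V] [InnerProductSpace ℝ V] [CompleteSpace V]
    {ι : Type*} [Fintype ι]
    (O : ι → Submodule ℝ V) (hclosed : ∀ ξ, IsClosed ((O ξ) : Set V))
    (J : ℕ) (g : ι → Fin J)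
    (horth : ∀ ξ₁ ξ₂, g ξ₁ = g ξ₂ → ξ₁ ≠ ξ₂ →
      ∀ x ∈ O ξ₁, ∀ y ∈ O ξ₂, (inner ℝ x y : ℝ) = 0)
    (f : V →L[ℝ] ℝ) :
    Real.sqrt (∑ ξ, ‖f.comp (O ξ).subtypeL‖ ^ 2) ≤ Real.sqrt J * ‖f‖ := by
  have : ∀ ξ, CompleteSpace (O ξ) := fun ξ ↦ (hclosed ξ).completeSpace_coe
  have hblock (j : Fin J) : OrthogonalFamily ℝ (fun ξ : {ξ // g ξ = j} ↦ O ξ)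
      fun ξ ↦ (O ξ).subtypeₗᵢ :=
    orthogonalFamily_iff_pairwise.mpr fun ξ₁ ξ₂ hne ↦ Submodule.isOrtho_iff_inner_eq.mpr <|
      horth ξ₁ ξ₂ (ξ₁.2.trans ξ₂.2.symm) (Subtype.coe_ne_coe.mpr hne)
  calc Real.sqrt (∑ ξ, ‖f.comp (O ξ).subtypeL‖ ^ 2)
      = Real.sqrt (∑ j, ∑ ξ : {ξ // g ξ = j}, ‖f.comp (O ξ).subtypeL‖ ^ 2) := by
        rw [Fintype.sum_fiberwise g fun ξ ↦ ‖f.comp (O ξ).subtypeL‖ ^ 2]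
    _ ≤ Real.sqrt (∑ _j : Fin J, ‖f‖ ^ 2) := by
        gcongr with j
        exact (hblock j).sum_norm_comp_subtypeL_sq_le f
    _ = Real.sqrt J * ‖f‖ := by
        rw [Finset.sum_const, Finset.card_univ, Fintype.card_fin, nsmul_eq_mul,
          Real.sqrt_mul (Nat.cast_nonneg J), Real.sqrt_sq (norm_nonneg f)]
end

section
/- Under the assumptions of the abstract localization estimate and the orthogonal-grouping estimate, the localized error estimator Δ_loc(ũ) := (1/α) c_pu (Σ_{ξ∈Υ} ‖R(ũ)‖²_{O_ξ'})^{1/2} is robust and efficient: ‖u − ũ‖ ≤ Δ_loc(ũ) ≤ (γ √J c_pu / α) ‖u − ũ‖, provided ũ lies in a subspace Ṽ on which the residual R(ũ) vanishes (i.e., ũ is the Galerkin projection onto Ṽ). -/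
/-!
Write `e = u - ũ`, so that `R v = a(e, v)` and `R` vanishes on `Ṽ`. Reliability: by coercivity
`α ‖e‖² ≤ R e = ∑_ξ R(P_ξ e)`, and since `R` vanishes on `Ṽ ∩ O_ξ`, each term is bounded by
`‖R‖_{O_ξ'}` times the distance from `P_ξ e` to `Ṽ ∩ O_ξ`; Cauchy–Schwarz and the definition of
`c_pu` give `α ‖e‖² ≤ (∑_ξ ‖R‖²_{O_ξ'})^{1/2} c_pu ‖e‖`. Efficiency: on mutually orthogonal
subspaces the local dual norms satisfy the Bessel inequality `∑_ξ ‖R‖²_{O_ξ'} ≤ ‖R‖²`, so summing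
over the `J` orthogonal groups gives `∑_ξ ‖R‖²_{O_ξ'} ≤ J ‖R‖² ≤ J γ² ‖e‖²`.
-/

open Filter Finset Topology

theorem Real.le_of_forall_lt_one_mul_le {a b : ℝ} (h : ∀ δ < 1, δ * a ≤ b) : a ≤ b := by
  have hlim : Tendsto (fun δ : ℝ => δ * a) (𝓝[<] 1) (𝓝 a) := by
    have := ((continuous_mul_const a).tendsto 1).mono_left (nhdsWithin_le_nhds (s := Set.Iio 1))
    rwa [one_mul] at this
  exact le_of_tendsto hlim (eventually_nhdsWithin_of_forall h)

theorem ContinuousLinearMap.exists_norm_le_one_mul_opNorm_le_apply {E : Type*}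
    [NormedAddCommGroup E] [NormedSpace ℝ E] (f : E →L[ℝ] ℝ) {δ : ℝ} (hδ : δ < 1) :
    ∃ x : E, ‖x‖ ≤ 1 ∧ δ * ‖f‖ ≤ f x := by
  rcases (norm_nonneg f).eq_or_lt with h0 | hpos
  · exact ⟨0, by simp [← h0]⟩
  have hlt : δ * ‖f‖ < ‖f‖ := mul_lt_of_lt_one_left hpos hδ
  obtain ⟨x, hx1, hx⟩ := f.exists_lt_apply_of_lt_opNorm hlt
  rcases le_total 0 (f x) with h | h
  · exact ⟨x, hx1.le, by rw [Real.norm_of_nonneg h] at hx; exact hx.le⟩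
  · refine ⟨-x, by rw [norm_neg]; exact hx1.le, ?_⟩
    rw [Real.norm_of_nonpos h] at hx
    rw [map_neg]; exact hx.le

section Normed

variable {E : Type*} [SeminormedAddCommGroup E] [NormedSpace ℝ E] {ι : Type*} [Fintype ι]

/-- `‖R.comp (O ξ).subtypeL‖` is the local dual norm `‖R‖_{O_ξ'}` of the paper. -/
noncomputable def localizedResidualNorm (R : E →L[ℝ] ℝ) (O : ι → Submodule ℝ E) : ℝ :=
  √(∑ ξ, ‖R.comp (O ξ).subtypeL‖ ^ 2)

theorem apply_le_opNorm_comp_subtypeL_mul_sqrt_iInf (R : E →L[ℝ] ℝ) {O W : Submodule ℝ E}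
    (hWO : W ≤ O) (hR : ∀ w ∈ W, R w = 0) {x : E} (hx : x ∈ O) :
    R x ≤ ‖R.comp O.subtypeL‖ * √(⨅ w : W, ‖x - w‖ ^ 2) := by
  set N := ‖R.comp O.subtypeL‖
  have hN : 0 ≤ N := norm_nonneg (R.comp O.subtypeL)
  rcases le_or_gt (R x) 0 with hneg | hpos
  · exact hneg.trans (by positivity)
  have hdist : ∀ w : W, R x ≤ N * ‖x - w‖ := fun w => by
    have h := (R.comp O.subtypeL).le_opNorm ⟨x - w, O.sub_mem hx (hWO w.2)⟩
    calc R x = R (x - w) := by rw [map_sub, hR w w.2, sub_zero]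
      _ ≤ N * ‖x - w‖ := (Real.le_norm_self _).trans h
  rw [← Real.sqrt_sq hN, ← Real.sqrt_mul (sq_nonneg N), Real.le_sqrt' hpos,
    Real.mul_iInf_of_nonneg (sq_nonneg N)]
  exact le_ciInf fun w => by rw [← mul_pow]; exact pow_le_pow_left₀ hpos.le (hdist w) 2

theorem apply_le_localizedResidualNorm_mul (R : E →L[ℝ] ℝ) (O : ι → Submodule ℝ E)
    {W : Submodule ℝ E} (hR : ∀ w ∈ W, R w = 0) (x : ι → E) (hx : ∀ ξ, x ξ ∈ O ξ) :
    R (∑ ξ, x ξ) ≤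
      localizedResidualNorm R O * √(∑ ξ, ⨅ w : (W ⊓ O ξ : Submodule ℝ E), ‖x ξ - w‖ ^ 2) := by
  have hW : ∀ ξ, ∀ w ∈ W ⊓ O ξ, R w = 0 := fun ξ w hw => hR w (Submodule.mem_inf.1 hw).1
  have hd : ∀ ξ, 0 ≤ ⨅ w : (W ⊓ O ξ : Submodule ℝ E), ‖x ξ - w‖ ^ 2 :=
    fun ξ => Real.iInf_nonneg fun _ => sq_nonneg _
  calc R (∑ ξ, x ξ) = ∑ ξ, R (x ξ) := map_sum R x univ
    _ ≤ ∑ ξ, ‖R.comp (O ξ).subtypeL‖ *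
          √(⨅ w : (W ⊓ O ξ : Submodule ℝ E), ‖x ξ - w‖ ^ 2) :=
        sum_le_sum fun ξ _ =>
          apply_le_opNorm_comp_subtypeL_mul_sqrt_iInf R inf_le_right (hW ξ) (hx ξ)
    _ ≤ _ := (Real.sum_mul_le_sqrt_mul_sqrt univ _ _).trans_eq <| by
        rw [localizedResidualNorm, sum_congr rfl fun ξ _ => Real.sq_sqrt (hd ξ)]

end Normed

section InnerProduct

variable {V : Type*} [NormedAddCommGroup V] [InnerProductSpace ℝ V] {ι : Type*}

theorem norm_sum_sq_eq_sum_norm_sq_of_inner_eq_zero {s : Finset ι} {x : ι → V}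
    (h : ∀ i ∈ s, ∀ j ∈ s, i ≠ j → inner ℝ (x i) (x j) = 0) :
    ‖∑ i ∈ s, x i‖ ^ 2 = ∑ i ∈ s, ‖x i‖ ^ 2 := by
  rw [← real_inner_self_eq_norm_sq, sum_inner]
  refine sum_congr rfl fun i hi => ?_
  rw [inner_sum, sum_eq_single_of_mem i hi fun j hj hji => h i hi j hj hji.symm,
    real_inner_self_eq_norm_sq]

theorem sum_sq_opNorm_comp_subtypeL_le (R : V →L[ℝ] ℝ) (O : ι → Submodule ℝ V) {s : Finset ι}
    (horth : ∀ i ∈ s, ∀ j ∈ s, i ≠ j → ∀ x ∈ O i, ∀ y ∈ O j, inner ℝ x y = 0) :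
    ∑ i ∈ s, ‖R.comp (O i).subtypeL‖ ^ 2 ≤ ‖R‖ ^ 2 := by
  set N : ι → ℝ := fun i => ‖R.comp (O i).subtypeL‖
  set T := ∑ i ∈ s, N i ^ 2
  have hN : ∀ i, 0 ≤ N i := fun i => norm_nonneg (R.comp (O i).subtypeL)
  have hT : 0 ≤ T := sum_nonneg fun _ _ => sq_nonneg _
  suffices hTR : T ≤ ‖R‖ * √T by
    nlinarith [Real.sq_sqrt hT, Real.sqrt_nonneg T, norm_nonneg R, sq_nonneg (√T - ‖R‖)]
  -- Test `R` on `w = ∑ N i • v i` with near-maximizers `v i ∈ O i`; orthogonality gives `‖w‖² ≤ T`.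
  refine Real.le_of_forall_lt_one_mul_le fun δ hδ => ?_
  choose v hv1 hvR using fun i =>
    (R.comp (O i).subtypeL).exists_norm_le_one_mul_opNorm_le_apply hδ
  set w := ∑ i ∈ s, N i • (v i : V)
  have hw : ‖w‖ ≤ √T := by
    refine Real.le_sqrt_of_sq_le ?_
    rw [norm_sum_sq_eq_sum_norm_sq_of_inner_eq_zero fun i hi j hj hij =>
      horth i hi j hj hij _ (Submodule.smul_mem _ _ (v i).2) _ (Submodule.smul_mem _ _ (v j).2)]
    refine sum_le_sum fun i _ => ?_
    rw [norm_smul, mul_pow, Real.norm_of_nonneg (hN i)]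
    exact mul_le_of_le_one_right (sq_nonneg _) (pow_le_one₀ (norm_nonneg _) (hv1 i))
  calc δ * T = ∑ i ∈ s, N i * (δ * N i) := by
        rw [mul_sum]; exact sum_congr rfl fun i _ => by ring
    _ ≤ ∑ i ∈ s, N i * R (v i) :=
        sum_le_sum fun i _ => mul_le_mul_of_nonneg_left (hvR i) (hN i)
    _ = R w := by simp [w, map_sum, map_smul]
    _ ≤ ‖R‖ * ‖w‖ := (Real.le_norm_self _).trans (R.le_opNorm w)
    _ ≤ ‖R‖ * √T := mul_le_mul_of_nonneg_left hw (norm_nonneg R)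

theorem localizedResidualNorm_le_sqrt_card_mul_opNorm [Fintype ι] {κ : Type*} [Fintype κ]
    [DecidableEq κ] (R : V →L[ℝ] ℝ) (O : ι → Submodule ℝ V) (g : ι → κ)
    (horth : ∀ i j, g i = g j → i ≠ j → ∀ x ∈ O i, ∀ y ∈ O j, inner ℝ x y = 0) :
    localizedResidualNorm R O ≤ √(Fintype.card κ) * ‖R‖ := by
  rw [localizedResidualNorm, ← Real.sqrt_sq (norm_nonneg R),
    ← Real.sqrt_mul (Nat.cast_nonneg _)]
  refine Real.sqrt_le_sqrt ?_
  calc ∑ ξ, ‖R.comp (O ξ).subtypeL‖ ^ 2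
      = ∑ k, ∑ ξ ∈ univ.filter (g · = k), ‖R.comp (O ξ).subtypeL‖ ^ 2 :=
        (sum_fiberwise univ g _).symm
    _ ≤ ∑ _k : κ, ‖R‖ ^ 2 := sum_le_sum fun k _ =>
        sum_sq_opNorm_comp_subtypeL_le R O fun i hi j hj hij =>
          horth i j ((mem_filter.1 hi).2.trans (mem_filter.1 hj).2.symm) hij
    _ = Fintype.card κ * ‖R‖ ^ 2 := by simp

end InnerProduct

theorem stmt_4_general {V : Type*} [NormedAddCommGroup V] [InnerProductSpace ℝ V]
    {ι : Type*} [Fintype ι]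
    (O : ι → Submodule ℝ V)
    (P : ι → V →L[ℝ] V)
    (hrange : ∀ ξ, ∀ v : V, P ξ v ∈ O ξ)
    (hsum : ∀ v : V, ∑ ξ, P ξ v = v)
    (Vt : Submodule ℝ V) (c : ℝ)
    (hc : ∀ φ : V, φ ≠ 0 →
      Real.sqrt (∑ ξ, ⨅ w : (Vt ⊓ O ξ : Submodule ℝ V), ‖P ξ φ - (w : V)‖ ^ 2) / ‖φ‖ ≤ c)
    (J : ℕ) (g : ι → Fin J)
    (horth : ∀ ξ₁ ξ₂, g ξ₁ = g ξ₂ → ξ₁ ≠ ξ₂ →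
      ∀ x ∈ O ξ₁, ∀ y ∈ O ξ₂, (inner ℝ x y : ℝ) = 0)
    (a : V →ₗ[ℝ] V →ₗ[ℝ] ℝ) (α γ : ℝ) (hα : 0 < α)
    (hcoer : ∀ v : V, α * ‖v‖ ^ 2 ≤ a v v)
    (hcont : ∀ u v : V, |a u v| ≤ γ * ‖u‖ * ‖v‖)
    (f : V →L[ℝ] ℝ) (u uN : V)
    (hu : ∀ v : V, a u v = f v)
    (hgal : ∀ v ∈ Vt, a uN v = f v)
    (R : V →L[ℝ] ℝ) (hR : ∀ v : V, R v = f v - a uN v) :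
    ‖u - uN‖ ≤ (1 / α) * c * Real.sqrt (∑ ξ, ‖R.comp (O ξ).subtypeL‖ ^ 2) ∧
    (1 / α) * c * Real.sqrt (∑ ξ, ‖R.comp (O ξ).subtypeL‖ ^ 2) ≤
      (γ * Real.sqrt J * c / α) * ‖u - uN‖ := by
  set e := u - uN with he_def
  have hRe : ∀ v, R v = a e v := fun v => by rw [hR, ← hu, he_def, map_sub, LinearMap.sub_apply]
  have hRVt : ∀ w ∈ Vt, R w = 0 := fun w hw => by rw [hR, hgal w hw, sub_self]
  rcases eq_or_ne e 0 with he | he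
  · have hR0 : R = 0 := by ext v; simp [hRe, he]
    simp [hR0, he, ContinuousLinearMap.opNorm_zero]
  have hepos : 0 < ‖e‖ := norm_pos_iff.2 he
  have hloc := (div_le_iff₀ hepos).1 (hc e he)
  have hc0 : 0 ≤ c := nonneg_of_mul_nonneg_left ((Real.sqrt_nonneg _).trans hloc) hepos
  have hγ : 0 ≤ γ * ‖e‖ := nonneg_of_mul_nonneg_left ((abs_nonneg _).trans (hcont e e)) hepos
  have hRnorm : ‖R‖ ≤ γ * ‖e‖ :=
    R.opNorm_le_bound hγ fun v => by rw [Real.norm_eq_abs, hRe]; exact hcont e v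
  refine ⟨?_, ?_⟩
  · have hrel : α * ‖e‖ * ‖e‖ ≤ c * localizedResidualNorm R O * ‖e‖ := calc
      α * ‖e‖ * ‖e‖ ≤ a e e := by rw [mul_assoc, ← sq]; exact hcoer e
      _ = R (∑ ξ, P ξ e) := by rw [hsum, hRe]
      _ ≤ localizedResidualNorm R O * (c * ‖e‖) :=
          (apply_le_localizedResidualNorm_mul R O hRVt _ (hrange · e)).trans
            (mul_le_mul_of_nonneg_left hloc (Real.sqrt_nonneg _))
      _ = c * localizedResidualNorm R O * ‖e‖ := by ring
    have hαe : α * ‖e‖ ≤ c * localizedResidualNorm R O := le_of_mul_le_mul_right hrel hepos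
    calc ‖e‖ = (1 / α) * (α * ‖e‖) := by field_simp
      _ ≤ (1 / α) * (c * localizedResidualNorm R O) := by gcongr
      _ = _ := (mul_assoc _ _ _).symm
  · have hJ := localizedResidualNorm_le_sqrt_card_mul_opNorm R O g horth
    rw [Fintype.card_fin] at hJ
    calc (1 / α) * c * localizedResidualNorm R O ≤ (1 / α) * c * (√J * (γ * ‖e‖)) := by
          gcongr; exact hJ.trans (by gcongr)
      _ = (γ * √J * c / α) * ‖e‖ := by ring

/-- Robustness and efficiency of the localized a posteriori error estimator
`Δ_loc(ũ) = (1/α) c_pu (∑_ξ ‖R(ũ)‖²_{O_ξ'})^{1/2}` for the Galerkin projection `ũ`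
onto the reduced space `Ṽ`. -/
theorem stmt_4 {V : Type*} [NormedAddCommGroup V] [InnerProductSpace ℝ V] [CompleteSpace V]
    {ι : Type*} [Fintype ι]
    (O : ι → Submodule ℝ V) (hclosed : ∀ ξ, IsClosed ((O ξ) : Set V))
    (P : ι → V →L[ℝ] V)
    (hrange : ∀ ξ, ∀ v : V, P ξ v ∈ O ξ)
    (hsum : ∀ v : V, ∑ ξ, P ξ v = v)
    (Vt : Submodule ℝ V) (c : ℝ)
    (hc : ∀ φ : V, φ ≠ 0 →
      Real.sqrt (∑ ξ, ⨅ w : (Vt ⊓ O ξ : Submodule ℝ V), ‖P ξ φ - (w : V)‖ ^ 2) / ‖φ‖ ≤ c)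
    (J : ℕ) (g : ι → Fin J)
    (horth : ∀ ξ₁ ξ₂, g ξ₁ = g ξ₂ → ξ₁ ≠ ξ₂ →
      ∀ x ∈ O ξ₁, ∀ y ∈ O ξ₂, (inner ℝ x y : ℝ) = 0)
    (a : V →ₗ[ℝ] V →ₗ[ℝ] ℝ) (α γ : ℝ) (hα : 0 < α)
    (hcoer : ∀ v : V, α * ‖v‖ ^ 2 ≤ a v v)
    (hcont : ∀ u v : V, |a u v| ≤ γ * ‖u‖ * ‖v‖)
    (f : V →L[ℝ] ℝ) (u uN : V)
    (hu : ∀ v : V, a u v = f v)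
    (huN : uN ∈ Vt)
    (hgal : ∀ v ∈ Vt, a uN v = f v)
    (R : V →L[ℝ] ℝ) (hR : ∀ v : V, R v = f v - a uN v) :
    ‖u - uN‖ ≤ (1 / α) * c * Real.sqrt (∑ ξ, ‖R.comp (O ξ).subtypeL‖ ^ 2) ∧
    (1 / α) * c * Real.sqrt (∑ ξ, ‖R.comp (O ξ).subtypeL‖ ^ 2) ≤
      (γ * Real.sqrt J * c / α) * ‖u - uN‖ :=
  stmt_4_general O P hrange hsum Vt c hc J g horth a α γ hα hcoer hcont f u uN hu hgal R hR
end

section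
/- Let V be a real Hilbert space, u, ũ ∈ V with u ≠ 0, and suppose Δ satisfies ‖u − ũ‖ ≤ Δ ≤ C‖u − ũ‖ for some constant C > 0, and ‖ũ‖ > Δ. Define Δ^rel := Δ/(‖ũ‖ − Δ). Then Δ^rel ≤ (1 + 2Δ^rel) · C · ‖u − ũ‖/‖u‖. -/
/-- Efficiency of the relative error estimator `Δ^rel = Δ/(‖ũ‖ − Δ)`. -/
theorem stmt_6 {V : Type*} [NormedAddCommGroup V] [InnerProductSpace ℝ V] [CompleteSpace V]
    (u uN : V) (hu : u ≠ 0) (Δ C : ℝ) (hC : 0 < C)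
    (h₁ : ‖u - uN‖ ≤ Δ) (h₂ : Δ ≤ C * ‖u - uN‖) (h₃ : Δ < ‖uN‖) :
    Δ / (‖uN‖ - Δ) ≤ (1 + 2 * (Δ / (‖uN‖ - Δ))) * C * (‖u - uN‖ / ‖u‖) := by
  have hd : 0 < ‖uN‖ - Δ := by linarith
  have he : (0:ℝ) ≤ ‖u - uN‖ := norm_nonneg _
  have hD : 0 ≤ Δ := le_trans he h₁
  have hu' : 0 < ‖u‖ := norm_pos_iff.mpr hu
  have hub : ‖u‖ ≤ ‖uN‖ + Δ := by
    have := norm_sub_norm_le u uN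
    linarith
  rw [div_le_iff₀ hd]
  rw [show (1 + 2 * (Δ / (‖uN‖ - Δ))) * C * (‖u - uN‖ / ‖u‖) * (‖uN‖ - Δ)
      = ((‖uN‖ - Δ) + 2 * Δ) * C * ‖u - uN‖ / ‖u‖ by field_simp]
  rw [le_div_iff₀ hu']
  nlinarith [mul_le_mul h₂ hub hu'.le (by linarith : (0:ℝ) ≤ C * ‖u - uN‖)]
end
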